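/- arXiv:1202.6565 — 4 statements merged into one kernel-verified Lean document; each statement's English description precedes it below -/
import Mathlib

section
/- Let f(z) = (z − i)/(z + i), so that f maps ℍ² \ {i} onto 𝔻 \ {0} with f(i) = 0. Then the constant 2 in the inequality j_{𝔻∖{0}}(f(x), f(y)) ≤ 2 · j_{ℍ²∖{i}}(x, y) (valid for all x, y ∈ ℍ² \ {i}) is best possible: with x = t + ai and y = ai, 0 < a < 1/3, the ratio j_{𝔻∖{0}}(f(x), f(y)) / j_{ℍ²∖{i}}(x, y) tends to 2 as t → ∞. -/
/-!
Write `s = ‖z + i‖`. The Cayley map satisfies `|f x - f y| = 2|x - y| / (|x + i| |y + i|)` and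
`1 - |f z|² = 4 Im z / s²`, so the boundary distance of `f z` in `𝔻 ∖ {0}` is at least
`2 d(z) / (s (s + 1))`, where `d(z) = min (Im z) |z - i|` is the boundary distance in `ℍ² ∖ {i}`.
With `m` the smaller of the two boundary distances, `B = |x - y| / m` and the triangle inequality
`|x + i| ≤ |y + i| + |x - y|`, the quotient inside `j_{𝔻∖{0}}` is at most `2B + B²`, whence
`1 + 2B + B² = (1 + B)²` gives the factor `2`.

For sharpness, along `x = t + ai` the boundary distance `1 - |f x|` decays like `2a / t²`, so
`j_{𝔻∖{0}}(f x, f y) = 2 log t + O(1)`, while `j_{ℍ²∖{i}}(x, ai) = log (1 + t / a)`.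
-/

open Metric Filter Topology Set

/-- The distance ratio metric of a domain `G`:
`j_G(x,y) = log(1 + |x-y| / min(d(x,∂G), d(y,∂G)))`. -/
noncomputable def jdist {E : Type*} [PseudoMetricSpace E] (G : Set E) (x y : E) : ℝ :=
  Real.log (1 + dist x y /
    min (Metric.infDist x (frontier G)) (Metric.infDist y (frontier G)))

open Complex (I)

theorem frontier_sdiff_singleton {X : Type*} [TopologicalSpace X] [T1Space X] {s : Set X}
    {x : X} [(𝓝[≠] x).NeBot] (hs : IsOpen s) (hx : x ∈ s) :
    frontier (s \ {x}) = frontier s ∪ {x} := by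
  have hcl : closure (s \ {x}) = closure s := by
    refine (closure_mono sdiff_subset).antisymm (closure_minimal ?_ isClosed_closure)
    simpa only [sdiff_eq] using (dense_compl_singleton x).open_subset_closure_inter hs
  rw [(hs.sdiff isClosed_singleton).frontier_eq, hs.frontier_eq, hcl]
  ext y
  by_cases hy : y = x
  · subst hy; simp [subset_closure hx]
  · simp [hy]

theorem Metric.infDist_union {α : Type*} [PseudoMetricSpace α] {x : α} {s t : Set α}
    (hs : s.Nonempty) (ht : t.Nonempty) :
    infDist x (s ∪ t) = min (infDist x s) (infDist x t) := by
  simp only [infDist, infEDist_union]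
  exact ENNReal.toReal_min (infEDist_ne_top hs) (infEDist_ne_top ht)

theorem Complex.infDist_setOf_im_eq_zero (z : ℂ) : infDist z {w : ℂ | w.im = 0} = |z.im| := by
  refine le_antisymm ?_ ((le_infDist ⟨0, by simp⟩).2 fun w hw => ?_)
  · calc infDist z {w : ℂ | w.im = 0} ≤ dist z z.re := infDist_le_dist_of_mem (by simp)
      _ = |z.im| := by simp [dist_of_re_eq]
  · simpa [dist_eq_norm, show w.im = 0 from hw] using abs_im_le_norm (z - w)

theorem Metric.infDist_sphere_zero {E : Type*} [NormedAddCommGroup E] [NormedSpace ℝ E]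
    [Nontrivial E] {w : E} {r : ℝ} (hw : ‖w‖ ≤ r) : infDist w (sphere 0 r) = r - ‖w‖ := by
  have hr : 0 ≤ r := (norm_nonneg w).trans hw
  refine le_antisymm ?_ ((le_infDist (NormedSpace.sphere_nonempty.2 hr)).2 fun y hy => ?_)
  · rcases eq_or_ne w 0 with rfl | hw0
    · obtain ⟨y, hy⟩ := exists_norm_eq E hr
      calc infDist 0 (sphere 0 r) ≤ dist 0 y := infDist_le_dist_of_mem (by simpa using hy)
        _ = r - ‖(0 : E)‖ := by simp [hy]
    · have hwpos : 0 < ‖w‖ := norm_pos_iff.2 hw0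
      have hmem : (r / ‖w‖) • w ∈ sphere (0 : E) r := by
        simp [norm_smul, abs_of_nonneg hr, hwpos.ne']
      calc infDist w (sphere 0 r) ≤ dist w ((r / ‖w‖) • w) := infDist_le_dist_of_mem hmem
        _ = ‖(1 - r / ‖w‖) • w‖ := by rw [dist_eq_norm, sub_smul, one_smul]
        _ = |(1 - r / ‖w‖) * ‖w‖| := by rw [norm_smul, Real.norm_eq_abs, abs_mul, abs_norm]
        _ = r - ‖w‖ := by
          rw [sub_mul, one_mul, div_mul_cancel₀ _ hwpos.ne', abs_sub_comm,
            abs_of_nonneg (sub_nonneg.2 hw)]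
  · rw [mem_sphere_zero_iff_norm] at hy
    rw [dist_comm, dist_eq_norm, ← hy]
    exact norm_sub_norm_le y w

theorem infDist_frontier_upperHalfPlane_sdiff_I (z : ℂ) :
    infDist z (frontier ({w : ℂ | 0 < w.im} \ {I})) = min |z.im| (dist z I) := by
  rw [frontier_sdiff_singleton (isOpen_lt continuous_const Complex.continuous_im) (by simp),
    Complex.frontier_setOfPred_lt_im, infDist_union ⟨0, by simp⟩ (singleton_nonempty I),
    Complex.infDist_setOf_im_eq_zero, infDist_singleton]

theorem infDist_frontier_ball_sdiff_zero {w : ℂ} (hw : ‖w‖ ≤ 1) :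
    infDist w (frontier (ball (0 : ℂ) 1 \ {0})) = min (1 - ‖w‖) ‖w‖ := by
  rw [frontier_sdiff_singleton isOpen_ball (mem_ball_self one_pos), frontier_ball 0 one_ne_zero,
    infDist_union (NormedSpace.sphere_nonempty.2 zero_le_one) (singleton_nonempty 0),
    infDist_sphere_zero hw, infDist_singleton, dist_zero_right]

noncomputable def cayley (z : ℂ) : ℂ := (z - I) / (z + I)

section Cayley

variable {z w : ℂ}

theorem add_I_ne_zero_of_im_pos (hz : 0 < z.im) : z + I ≠ 0 := by
  intro h
  have := congrArg Complex.im h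
  simp only [Complex.add_im, Complex.I_im, Complex.zero_im] at this
  linarith

theorem im_add_one_le_norm_add_I (hz : 0 < z.im) : z.im + 1 ≤ ‖z + I‖ := by
  simpa [abs_of_pos (by linarith : 0 < z.im + 1)] using Complex.abs_im_le_norm (z + I)

theorem norm_add_I_sq (z : ℂ) : ‖z + I‖ ^ 2 = ‖z - I‖ ^ 2 + 4 * z.im := by
  simp only [Complex.sq_norm, Complex.normSq_apply, Complex.add_re, Complex.add_im,
    Complex.sub_re, Complex.sub_im, Complex.I_re, Complex.I_im]
  ring

theorem norm_cayley (z : ℂ) : ‖cayley z‖ = ‖z - I‖ / ‖z + I‖ := norm_div _ _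

theorem norm_cayley_lt_one (hz : 0 < z.im) : ‖cayley z‖ < 1 := by
  have hs : 0 < ‖z + I‖ := norm_pos_iff.2 (add_I_ne_zero_of_im_pos hz)
  rw [norm_cayley, div_lt_one hs, ← sq_lt_sq₀ (norm_nonneg _) hs.le, norm_add_I_sq]
  linarith

theorem one_sub_norm_cayley (hz : 0 < z.im) :
    1 - ‖cayley z‖ = 4 * z.im / (‖z + I‖ ^ 2 * (1 + ‖cayley z‖)) := by
  have hs : 0 < ‖z + I‖ := norm_pos_iff.2 (add_I_ne_zero_of_im_pos hz)
  rw [eq_div_iff (by positivity), norm_cayley]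
  field_simp
  linear_combination norm_add_I_sq z

theorem cayley_ne_zero (hz : 0 < z.im) (hzI : z ≠ I) : cayley z ≠ 0 :=
  div_ne_zero (sub_ne_zero.2 hzI) (add_I_ne_zero_of_im_pos hz)

theorem cayley_ne_one (hz : 0 < z.im) : cayley z ≠ 1 := by
  rw [cayley, Ne, div_eq_one_iff_eq (add_I_ne_zero_of_im_pos hz)]
  intro h
  have := congrArg Complex.im h
  simp only [Complex.sub_im, Complex.add_im, Complex.I_im] at this
  linarith

theorem dist_cayley (hz : 0 < z.im) (hw : 0 < w.im) :
    dist (cayley z) (cayley w) = 2 * dist z w / (‖z + I‖ * ‖w + I‖) := by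
  have hz' := add_I_ne_zero_of_im_pos hz
  have hw' := add_I_ne_zero_of_im_pos hw
  have : cayley z - cayley w = 2 * I * (z - w) / ((z + I) * (w + I)) := by
    rw [cayley, cayley]; field_simp; ring
  rw [dist_eq_norm, this, norm_div, norm_mul, norm_mul, Complex.norm_I, dist_eq_norm]
  norm_num

theorem tendsto_cayley_cobounded : Tendsto cayley (Bornology.cobounded ℂ) (𝓝 1) := by
  have h := ((tendsto_inv₀_cobounded.comp (tendsto_add_const_cobounded I)).const_mul
    (2 * I)).const_sub 1
  rw [mul_zero, sub_zero] at h
  refine h.congr' ?_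
  filter_upwards [(tendsto_add_const_cobounded I).eventually_ne_cobounded 0] with z hz
  simp only [Function.comp_apply, cayley]
  field_simp
  ring

end Cayley

theorem le_min_one_sub_norm_cayley_norm_cayley {z : ℂ} (hz : 0 < z.im) {m : ℝ} (hm : 0 ≤ m)
    (hmz : m ≤ z.im) (hmI : m ≤ dist z I) :
    2 * m / (‖z + I‖ * (‖z + I‖ + 1)) ≤ min (1 - ‖cayley z‖) ‖cayley z‖ := by
  have hs : 1 ≤ ‖z + I‖ := by linarith [im_add_one_le_norm_add_I hz]
  have hc : ‖cayley z‖ ≤ 1 := (norm_cayley_lt_one hz).le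
  refine le_min ?_ ?_
  · calc 2 * m / (‖z + I‖ * (‖z + I‖ + 1)) ≤ 4 * z.im / (‖z + I‖ ^ 2 * (1 + 1)) := by
          rw [div_le_div_iff₀ (by positivity) (by positivity)]
          nlinarith
      _ ≤ 4 * z.im / (‖z + I‖ ^ 2 * (1 + ‖cayley z‖)) := by gcongr
      _ = 1 - ‖cayley z‖ := (one_sub_norm_cayley hz).symm
  · calc 2 * m / (‖z + I‖ * (‖z + I‖ + 1)) ≤ m / ‖z + I‖ := by
          rw [div_le_div_iff₀ (by positivity) (by positivity)]
          nlinarith [mul_nonneg (mul_nonneg hm (by linarith : 0 ≤ ‖z + I‖)) (sub_nonneg.2 hs)]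
      _ ≤ ‖z - I‖ / ‖z + I‖ := by gcongr; rwa [← dist_eq_norm]
      _ = ‖cayley z‖ := (norm_cayley z).symm

theorem dist_cayley_div_min_le {x y : ℂ} (hx : 0 < x.im) (hy : 0 < y.im) {m : ℝ} (hm : 0 < m)
    (hmx : m ≤ x.im) (hmxI : m ≤ dist x I) (hmy : m ≤ y.im) :
    dist (cayley x) (cayley y) / min (1 - ‖cayley x‖) ‖cayley x‖ ≤
      2 * (dist x y / m) + (dist x y / m) ^ 2 := by
  have hbound := le_min_one_sub_norm_cayley_norm_cayley hx hm.le hmx hmxI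
  have htri : ‖x + I‖ ≤ ‖y + I‖ + dist x y := by
    calc ‖x + I‖ = ‖(y + I) + (x - y)‖ := by congr 1; ring
      _ ≤ ‖y + I‖ + dist x y := by rw [dist_eq_norm]; exact norm_add_le _ _
  have hsx := im_add_one_le_norm_add_I hx
  have hsy := im_add_one_le_norm_add_I hy
  rw [dist_cayley hx hy]
  set d := dist x y
  set sx := ‖x + I‖
  set sy := ‖y + I‖
  have hsx0 : 0 < sx := by linarith
  have hsy0 : sy ≠ 0 := by linarith
  have hkey : sx + 1 ≤ sy * (2 + d / m) := by
    have : d ≤ sy * d / m := by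
      rw [le_div_iff₀ hm]
      exact (mul_le_mul_of_nonneg_left (by linarith) dist_nonneg).trans_eq (mul_comm _ _)
    rw [mul_add, ← mul_div_assoc]
    linarith
  calc 2 * d / (sx * sy) / min (1 - ‖cayley x‖) ‖cayley x‖
      ≤ 2 * d / (sx * sy) / (2 * m / (sx * (sx + 1))) := by gcongr
    _ = d * (sx + 1) / (sy * m) := by field_simp
    _ ≤ d * (sy * (2 + d / m)) / (sy * m) := by gcongr
    _ = 2 * (d / m) + (d / m) ^ 2 := by field_simp

theorem log_one_add_le_two_mul_log_one_add {A B : ℝ} (hA : 0 ≤ A) (hB : 0 ≤ B)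
    (h : A ≤ 2 * B + B ^ 2) : Real.log (1 + A) ≤ 2 * Real.log (1 + B) := by
  rw [← Real.log_rpow (by linarith), Real.rpow_two]
  exact Real.log_le_log (by linarith) (by nlinarith)

theorem jdist_cayley_le_two_mul {x y : ℂ} (hx : x ∈ {z : ℂ | 0 < z.im} \ {I})
    (hy : y ∈ {z : ℂ | 0 < z.im} \ {I}) :
    jdist (ball (0 : ℂ) 1 \ {0}) (cayley x) (cayley y) ≤
      2 * jdist ({z : ℂ | 0 < z.im} \ {I}) x y := by
  obtain ⟨hx : 0 < x.im, hxI : x ≠ I⟩ := hx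
  obtain ⟨hy : 0 < y.im, hyI : y ≠ I⟩ := hy
  unfold jdist
  rw [infDist_frontier_ball_sdiff_zero (norm_cayley_lt_one hx).le,
    infDist_frontier_ball_sdiff_zero (norm_cayley_lt_one hy).le,
    infDist_frontier_upperHalfPlane_sdiff_I, infDist_frontier_upperHalfPlane_sdiff_I,
    abs_of_pos hx, abs_of_pos hy]
  set m := min (min x.im (dist x I)) (min y.im (dist y I))
  have hm : 0 < m := lt_min (lt_min hx (dist_pos.2 hxI)) (lt_min hy (dist_pos.2 hyI))
  have hmin : 0 ≤ min (min (1 - ‖cayley x‖) ‖cayley x‖) (min (1 - ‖cayley y‖) ‖cayley y‖) :=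
    le_min (le_min (by linarith [norm_cayley_lt_one hx]) (norm_nonneg _))
      (le_min (by linarith [norm_cayley_lt_one hy]) (norm_nonneg _))
  refine log_one_add_le_two_mul_log_one_add (div_nonneg dist_nonneg hmin)
    (div_nonneg dist_nonneg hm.le) ?_
  rcases min_choice (min (1 - ‖cayley x‖) ‖cayley x‖) (min (1 - ‖cayley y‖) ‖cayley y‖) with
    h | h <;> rw [h]
  · exact dist_cayley_div_min_le hx hy hm (by simp [m]) (by simp [m]) (by simp [m])
  · rw [dist_comm, dist_comm x]
    exact dist_cayley_div_min_le hy hx hm (by simp [m]) (by simp [m]) (by simp [m])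

theorem tendsto_log_div_log_of_tendsto_div_pow {F : ℝ → ℝ} {k : ℕ} {c : ℝ} (hc : 0 < c)
    (hF : Tendsto (fun t => F t / t ^ k) atTop (𝓝 c)) :
    Tendsto (fun t => Real.log (F t) / Real.log t) atTop (𝓝 k) := by
  have h := ((hF.log hc.ne').div_atTop Real.tendsto_log_atTop).const_add (k : ℝ)
  rw [add_zero] at h
  refine h.congr' ?_
  filter_upwards [hF.eventually (eventually_gt_nhds hc), eventually_gt_atTop 1] with t hFt ht
  have htk : 0 < t ^ k := by positivity
  have hlog : Real.log t ≠ 0 := (Real.log_pos ht).ne'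
  rw [show F t = F t / t ^ k * t ^ k by field_simp, Real.log_mul (by positivity) htk.ne',
    Real.log_pow, div_mul_cancel₀ _ htk.ne']
  field_simp
  ring

theorem jdist_upperHalfPlane_sdiff_I_ofReal_add_mul_I {a t : ℝ} (ha : 0 < a) (ha' : a ≤ 1 / 2)
    (ht : 1 ≤ t) :
    jdist ({z : ℂ | 0 < z.im} \ {I}) ((t : ℂ) + a * I) (a * I) = Real.log (1 + t / a) := by
  have hx : a ≤ dist ((t : ℂ) + a * I) I := by
    have := Complex.abs_re_le_norm ((t : ℂ) + a * I - I)
    simp only [Complex.sub_re, Complex.add_re, Complex.ofReal_re, Complex.re_ofReal_mul,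
      Complex.I_re, mul_zero, add_zero, sub_zero] at this
    rw [dist_eq_norm]
    linarith [le_abs_self t]
  have hy : a ≤ dist ((a : ℂ) * I) I := by
    rw [dist_eq_norm, show (a : ℂ) * I - I = ((a - 1 : ℝ) : ℂ) * I by push_cast; ring,
      norm_mul, Complex.norm_I, mul_one, Complex.norm_real, Real.norm_eq_abs,
      abs_of_neg (by linarith)]
    linarith
  have hxy : dist ((t : ℂ) + a * I) (a * I) = t := by
    rw [dist_eq_norm, add_sub_cancel_right, Complex.norm_real, Real.norm_eq_abs,
      abs_of_pos (by linarith)]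
  unfold jdist
  rw [infDist_frontier_upperHalfPlane_sdiff_I, infDist_frontier_upperHalfPlane_sdiff_I, hxy]
  simp [abs_of_pos ha, hx, hy]

theorem tendsto_jdist_upperHalfPlane_sdiff_I_div_log {a : ℝ} (ha : 0 < a) (ha' : a ≤ 1 / 2) :
    Tendsto (fun t : ℝ => jdist ({z : ℂ | 0 < z.im} \ {I}) ((t : ℂ) + a * I) (a * I) /
      Real.log t) atTop (𝓝 1) := by
  have h : Tendsto (fun t : ℝ => (1 + t / a) / t ^ 1) atTop (𝓝 (1 / a)) := by
    have hinv := tendsto_inv_atTop_zero.add_const (1 / a)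
    rw [zero_add] at hinv
    refine hinv.congr' ?_
    filter_upwards [eventually_gt_atTop 0] with t ht
    field_simp
  have hlog := tendsto_log_div_log_of_tendsto_div_pow (one_div_pos.2 ha) h
  rw [Nat.cast_one] at hlog
  refine hlog.congr' ?_
  filter_upwards [eventually_ge_atTop 1] with t ht
  rw [jdist_upperHalfPlane_sdiff_I_ofReal_add_mul_I ha ha' ht]

theorem tendsto_cayley_ofReal_add (v : ℂ) :
    Tendsto (fun t : ℝ => cayley (t + v)) atTop (𝓝 1) :=
  tendsto_cayley_cobounded.comp
    ((tendsto_add_const_cobounded v).comp (RCLike.tendsto_ofReal_atTop_cobounded ℂ))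

theorem norm_ofReal_add_mul_I_add_I_sq (t a : ℝ) :
    ‖(t : ℂ) + a * I + I‖ ^ 2 = t ^ 2 + (a + 1) ^ 2 := by
  simp only [Complex.sq_norm, Complex.normSq_apply, Complex.add_re, Complex.add_im,
    Complex.ofReal_re, Complex.ofReal_im, Complex.mul_re, Complex.mul_im, Complex.I_re,
    Complex.I_im]
  ring

theorem tendsto_one_add_dist_cayley_div_one_sub_norm_cayley_div_sq {a : ℝ} (ha : 0 < a) (c : ℂ) :
    Tendsto (fun t : ℝ => (1 + dist (cayley (t + a * I)) c / (1 - ‖cayley (t + a * I)‖)) / t ^ 2)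
      atTop (𝓝 (dist 1 c / (2 * a))) := by
  have hw := tendsto_cayley_ofReal_add (a * I)
  have hinv : Tendsto (fun t : ℝ => (t ^ 2)⁻¹) atTop (𝓝 0) :=
    tendsto_inv_atTop_zero.comp (tendsto_pow_atTop two_ne_zero)
  have hD := hw.dist (tendsto_const_nhds (x := c))
  have h := hinv.add (((hD.mul (hw.norm.const_add 1)).div_const (4 * a)).mul
    ((hinv.const_mul ((a + 1) ^ 2)).const_add 1))
  rw [norm_one, mul_zero, add_zero, zero_add, mul_one,
    show dist 1 c * (1 + 1) / (4 * a) = dist 1 c / (2 * a) by field_simp; ring] at h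
  refine h.congr' ?_
  filter_upwards [eventually_gt_atTop 0] with t ht
  have him : ((t : ℂ) + a * I).im = a := by simp
  rw [one_sub_norm_cayley (by rwa [him]), norm_ofReal_add_mul_I_add_I_sq, him]
  field_simp

theorem tendsto_jdist_ball_sdiff_zero_cayley_div_log {a : ℝ} (ha : 0 < a) {y : ℂ}
    (hy : y ∈ {z : ℂ | 0 < z.im} \ {I}) :
    Tendsto (fun t : ℝ => jdist (ball (0 : ℂ) 1 \ {0}) (cayley (t + a * I)) (cayley y) /
      Real.log t) atTop (𝓝 2) := by
  obtain ⟨hy : 0 < y.im, hyI : y ≠ I⟩ := hy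
  have hc : 0 < dist 1 (cayley y) / (2 * a) :=
    div_pos (dist_pos.2 (cayley_ne_one hy).symm) (by positivity)
  have h := tendsto_log_div_log_of_tendsto_div_pow hc
    (tendsto_one_add_dist_cayley_div_one_sub_norm_cayley_div_sq ha (cayley y))
  rw [Nat.cast_ofNat] at h
  refine h.congr' ?_
  have hnorm : Tendsto (fun t : ℝ => ‖cayley (t + a * I)‖) atTop (𝓝 1) := by
    simpa using (tendsto_cayley_ofReal_add (a * I)).norm
  have hdy : 0 < min (1 - ‖cayley y‖) ‖cayley y‖ :=
    lt_min (sub_pos.2 (norm_cayley_lt_one hy)) (norm_pos_iff.2 (cayley_ne_zero hy hyI))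
  have hE := hnorm.const_sub 1
  rw [sub_self] at hE
  filter_upwards [hE.eventually (eventually_lt_nhds hdy),
    hnorm.eventually (eventually_gt_nhds (by norm_num : (1 : ℝ) / 2 < 1))] with t hEt hnt
  have him : 0 < ((t : ℂ) + a * I).im := by simpa using ha
  have hmin : min (1 - ‖cayley (t + a * I)‖) ‖cayley (t + a * I)‖ = 1 - ‖cayley (t + a * I)‖ :=
    min_eq_left (by linarith)
  unfold jdist
  rw [infDist_frontier_ball_sdiff_zero (norm_cayley_lt_one him).le,
    infDist_frontier_ball_sdiff_zero (norm_cayley_lt_one hy).le, hmin, min_eq_left hEt.le]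

/-- For `f(z) = (z-i)/(z+i) : ℍ² \ {i} → 𝔻 \ {0}` the inequality
`j_{𝔻∖{0}}(f x, f y) ≤ 2 j_{ℍ²∖{i}}(x, y)` holds, and the constant `2` is
best possible: with `x = t + ai`, `y = ai`, `0 < a < 1/3`, the ratio tends
to `2` as `t → ∞`. -/
theorem cayley_punctured_jdist_sharp (f : ℂ → ℂ)
    (hf : ∀ z, f z = (z - Complex.I) / (z + Complex.I)) :
    (∀ x ∈ {z : ℂ | 0 < z.im} \ {Complex.I}, ∀ y ∈ {z : ℂ | 0 < z.im} \ {Complex.I},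
        jdist (Metric.ball (0 : ℂ) 1 \ {0}) (f x) (f y) ≤
          2 * jdist ({z : ℂ | 0 < z.im} \ {Complex.I}) x y) ∧
      ∀ a : ℝ, 0 < a → a < 1 / 3 →
        Tendsto (fun t : ℝ =>
            jdist (Metric.ball (0 : ℂ) 1 \ {0})
                (f ((t : ℂ) + (a : ℂ) * Complex.I)) (f ((a : ℂ) * Complex.I)) /
              jdist ({z : ℂ | 0 < z.im} \ {Complex.I})
                ((t : ℂ) + (a : ℂ) * Complex.I) ((a : ℂ) * Complex.I))
          atTop (𝓝 2) := by
  obtain rfl : f = cayley := funext hf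
  refine ⟨fun x hx y hy => jdist_cayley_le_two_mul hx hy, fun a ha ha3 => ?_⟩
  have hy : (a : ℂ) * I ∈ {z : ℂ | 0 < z.im} \ {I} := by
    refine ⟨by simpa using ha, fun h => ?_⟩
    have := congrArg Complex.im h
    simp only [Complex.mul_im, Complex.ofReal_re, Complex.I_im, mul_one, Complex.ofReal_im,
      Complex.I_re, mul_zero, add_zero] at this
    linarith
  have h := (tendsto_jdist_ball_sdiff_zero_cayley_div_log ha hy).div
    (tendsto_jdist_upperHalfPlane_sdiff_I_div_log ha (by linarith)) one_ne_zero
  rw [div_one] at h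
  refine h.congr' ?_
  filter_upwards [eventually_gt_atTop 1] with t ht
  exact div_div_div_cancel_right₀ (Real.log_pos ht).ne' _ _
end

section
/- Let f(z) = i(1 + z)/(1 − z), so that f maps 𝔻 \ {0} onto ℍ² \ {i} with f(0) = i. Then for all x, y ∈ 𝔻 \ {0}: j_{ℍ²∖{i}}(f(x), f(y)) ≤ 2 · j_{𝔻∖{0}}(x, y), and the constant 2 is best possible: for x = t and y = −t with 1/2 < t < 1 one has j_{ℍ²∖{i}}(f(x), f(y)) = 2 · j_{𝔻∖{0}}(x, y). -/
/-!
The inverse Cayley map `f` is a Möbius transformation with pole `1 ∈ ∂𝔻`, and it carries the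
boundary `𝕊¹ ∪ {0}` of `𝔻 ∖ {0}` onto the boundary `ℝ ∪ {i}` of `ℍ² ∖ {i}`. Following
Gehring–Osgood, take `w = f z` on the latter boundary. Invariance of the absolute cross ratio gives
`|f x - f y| / |f x - w| = |x - y| |z - 1| / (|x - z| |y - 1|)`, and bounding `|z - 1|` by
`|z - x| + |x - y| + |y - 1|`, where `|x - z|` and `|y - 1|` are at least
`m = min (d(x), d(y))`, yields `1 + |f x - f y| / d'(f x) ≤ (1 + |x - y| / m) ^ 2`, i.e. the factor
`2` in front of `j`. For `x = t`, `y = -t` the images lie on the imaginary axis, `d(±t) = 1 - t`,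
and `f(-t)` is within `(1 - t)/(1 + t)` of the boundary point `0 = f(-1)`; this makes the estimate
an equality.
-/

open Metric Filter Topology Set

theorem IsOpen.frontier_diff_singleton {X : Type*} [TopologicalSpace X] [T1Space X] {s : Set X}
    {p : X} [(𝓝[≠] p).NeBot] (hs : IsOpen s) (hp : p ∈ s) :
    frontier (s \ {p}) = insert p (frontier s) := by
  have hcl : closure (s \ {p}) = closure s :=
    (closure_mono sdiff_subset).antisymm <| closure_minimal
      ((dense_compl_singleton p).open_subset_closure_inter hs) isClosed_closure
  rw [(hs.sdiff isClosed_singleton).frontier_eq, hs.frontier_eq, hcl]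
  ext z
  by_cases hz : z = p
  · simp [hz, subset_closure hp]
  · simp [hz]

theorem frontier_ball_diff_center {E : Type*} [NormedAddCommGroup E] [NormedSpace ℝ E]
    [Nontrivial E] (x : E) {r : ℝ} (hr : 0 < r) :
    frontier (ball x r \ {x}) = insert x (sphere x r) := by
  rw [isOpen_ball.frontier_diff_singleton (mem_ball_self hr), frontier_ball x hr.ne']

theorem min_sub_norm_norm_le_infDist_frontier {E : Type*} [NormedAddCommGroup E]
    [NormedSpace ℝ E] [Nontrivial E] {r : ℝ} (hr : 0 < r) (x : E) :
    min (r - ‖x‖) ‖x‖ ≤ infDist x (frontier (ball 0 r \ {0})) := by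
  rw [frontier_ball_diff_center 0 hr, le_infDist (insert_nonempty _ _)]
  rintro z (rfl | hz)
  · simp
  · rw [mem_sphere_zero_iff_norm] at hz
    calc min (r - ‖x‖) ‖x‖ ≤ ‖z‖ - ‖x‖ := hz ▸ min_le_left _ _
      _ ≤ dist x z := by rw [dist_comm, dist_eq_norm]; exact norm_sub_norm_le z x

theorem IsOpen.infDist_frontier_pos {X : Type*} [PseudoMetricSpace X] {U : Set X} {x : X}
    (hU : IsOpen U) (hx : x ∈ U) (hne : (frontier U).Nonempty) :
    0 < infDist x (frontier U) := by
  rw [← isClosed_frontier.notMem_iff_infDist_pos hne, hU.frontier_eq]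
  exact fun h => h.2 hx

theorem le_mul_infDist {X : Type*} [PseudoMetricSpace X] {x : X} {s : Set X} {a C : ℝ}
    (hC : 0 ≤ C) (hs : s.Nonempty) (h : ∀ w ∈ s, a ≤ C * dist x w) : a ≤ C * infDist x s := by
  rcases hC.eq_or_lt with rfl | hC
  · obtain ⟨w, hw⟩ := hs
    simpa using h w hw
  rw [← div_le_iff₀' hC, le_infDist hs]
  exact fun w hw => (div_le_iff₀' hC).2 (h w hw)

theorem dist_mul_dist_le_of_le_dist {X : Type*} [PseudoMetricSpace X] {x y z w : X} {m : ℝ}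
    (hm : 0 < m) (hxz : m ≤ dist x z) (hyw : m ≤ dist y w) :
    dist x y * dist z w ≤ ((1 + dist x y / m) ^ 2 - 1) * (dist x z * dist y w) := by
  set s := dist x y
  have hzw : dist z w ≤ dist x z + s + dist y w := by
    simpa [dist_comm z x] using dist_triangle4 z x y w
  have hC : (1 + s / m) ^ 2 - 1 = s * (2 * m + s) / m ^ 2 := by field_simp; ring
  rw [hC, div_mul_eq_mul_div, le_div_iff₀ (by positivity)]
  have hA : 0 ≤ dist x z - m := sub_nonneg.2 hxz
  have hB : 0 ≤ dist y w - m := sub_nonneg.2 hyw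
  have key : (dist x z + s + dist y w) * m ^ 2 ≤ (2 * m + s) * (dist x z * dist y w) := by
    linear_combination mul_nonneg (by positivity : 0 ≤ 2 * m + s) (mul_nonneg hA hB) +
      mul_nonneg (mul_nonneg hm.le (add_nonneg hA hB)) (by positivity : 0 ≤ m + s)
  calc s * dist z w * m ^ 2 ≤ s * ((dist x z + s + dist y w) * m ^ 2) := by
        rw [mul_assoc]; gcongr
    _ ≤ s * ((2 * m + s) * (dist x z * dist y w)) := by gcongr
    _ = _ := by ring

section CrossRatio

variable {X Y : Type*} [PseudoMetricSpace X] [PseudoMetricSpace Y]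

/-- `f` preserves the absolute cross ratio `|x - y| |z - p| / (|x - z| |y - p|)`, where `f` sends
`p` to `∞`; every Möbius transformation with pole `p` does. -/
def PreservesCrossRatioWithPole (f : X → Y) (p : X) : Prop :=
  ∀ x y z, x ≠ p → y ≠ p → z ≠ p →
    dist (f x) (f y) * dist x z * dist y p = dist (f x) (f z) * dist x y * dist z p

variable {G : Set X} {G' : Set Y} {f : X → Y} {p : X}

theorem one_add_dist_div_infDist_image_le (hf : PreservesCrossRatioWithPole f p)
    (hp : p ∈ frontier G) (hfront : frontier G' ⊆ f '' (frontier G \ {p}))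
    {x y : X} {m : ℝ} (hm : 0 < m) (hmx : m ≤ infDist x (frontier G))
    (hmy : m ≤ infDist y (frontier G)) :
    1 + dist (f x) (f y) / infDist (f x) (frontier G') ≤ (1 + dist x y / m) ^ 2 := by
  set C := (1 + dist x y / m) ^ 2 - 1
  have hC : 0 ≤ C := by
    have : 0 ≤ dist x y / m := div_nonneg dist_nonneg hm.le
    nlinarith
  suffices dist (f x) (f y) / infDist (f x) (frontier G') ≤ C by linarith
  rcases (infDist_nonneg (x := f x) (s := frontier G')).eq_or_lt with h0 | hpos
  · rwa [← h0, div_zero]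
  have hne : (frontier G').Nonempty :=
    nonempty_iff_ne_empty.2 fun h => hpos.ne' (by rw [h, infDist_empty])
  rw [div_le_iff₀ hpos]
  refine le_mul_infDist hC hne fun w hw => ?_
  obtain ⟨z, ⟨hz, hzp⟩, rfl⟩ := hfront hw
  have hxz : m ≤ dist x z := hmx.trans (infDist_le_dist_of_mem hz)
  have hyp : m ≤ dist y p := hmy.trans (infDist_le_dist_of_mem hp)
  have ne_p : ∀ u, m ≤ dist u p → u ≠ p := fun u hu h => by rw [h, dist_self] at hu; linarith
  have hxp := ne_p x (hmx.trans (infDist_le_dist_of_mem hp))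
  refine le_of_mul_le_mul_right ?_ (mul_pos (hm.trans_le hxz) (hm.trans_le hyp))
  calc dist (f x) (f y) * (dist x z * dist y p)
      = dist (f x) (f z) * (dist x y * dist z p) := by
        rw [← mul_assoc, hf x y z hxp (ne_p y hyp) hzp, mul_assoc]
    _ ≤ dist (f x) (f z) * (C * (dist x z * dist y p)) :=
        mul_le_mul_of_nonneg_left (dist_mul_dist_le_of_le_dist hm hxz hyp) dist_nonneg
    _ = C * dist (f x) (f z) * (dist x z * dist y p) := by ring

theorem jdist_image_le_two_mul_jdist (hf : PreservesCrossRatioWithPole f p)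
    (hp : p ∈ frontier G) (hfront : frontier G' ⊆ f '' (frontier G \ {p}))
    {x y : X} (hx : 0 < infDist x (frontier G)) (hy : 0 < infDist y (frontier G)) :
    jdist G' (f x) (f y) ≤ 2 * jdist G x y := by
  set m := min (infDist x (frontier G)) (infDist y (frontier G))
  have key : 1 + dist (f x) (f y) / min (infDist (f x) (frontier G')) (infDist (f y) (frontier G'))
      ≤ (1 + dist x y / m) ^ 2 := by
    rcases min_choice (infDist (f x) (frontier G')) (infDist (f y) (frontier G')) with h | h <;>
      rw [h]
    · exact one_add_dist_div_infDist_image_le hf hp hfront (lt_min hx hy) (min_le_left _ _)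
        (min_le_right _ _)
    · rw [dist_comm (f x), dist_comm x]
      exact one_add_dist_div_infDist_image_le hf hp hfront (lt_min hx hy) (min_le_right _ _)
        (min_le_left _ _)
  calc jdist G' (f x) (f y) ≤ Real.log ((1 + dist x y / m) ^ 2) :=
        Real.log_le_log (add_pos_of_pos_of_nonneg one_pos
          (div_nonneg dist_nonneg (le_min infDist_nonneg infDist_nonneg))) key
    _ = 2 * jdist G x y := by rw [Real.log_pow, jdist]; push_cast; rfl

end CrossRatio

open Complex

noncomputable def invCayley (z : ℂ) : ℂ := I * (1 + z) / (1 - z)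

theorem invCayley_sub_invCayley {x y : ℂ} (hx : x ≠ 1) (hy : y ≠ 1) :
    invCayley x - invCayley y = 2 * I * (x - y) / ((1 - x) * (1 - y)) := by
  rw [invCayley, invCayley, div_sub_div _ _ (sub_ne_zero.2 hx.symm) (sub_ne_zero.2 hy.symm)]
  ring

theorem dist_invCayley {x y : ℂ} (hx : x ≠ 1) (hy : y ≠ 1) :
    dist (invCayley x) (invCayley y) = 2 * dist x y / (dist x 1 * dist y 1) := by
  simp [dist_eq_norm, invCayley_sub_invCayley hx hy, norm_sub_rev (1 : ℂ)]

theorem invCayley_preservesCrossRatioWithPole : PreservesCrossRatioWithPole invCayley 1 := by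
  intro x y z hx hy hz
  have := dist_pos.2 hx
  have := dist_pos.2 hy
  have := dist_pos.2 hz
  rw [dist_invCayley hx hy, dist_invCayley hx hz]
  field_simp

theorem invCayley_ofReal (u : ℝ) : invCayley u = ((1 + u) / (1 - u) : ℝ) * I := by
  rw [invCayley]
  push_cast
  ring

theorem im_invCayley (z : ℂ) : (invCayley z).im = (1 - ‖z‖ ^ 2) / ‖1 - z‖ ^ 2 := by
  rw [invCayley, div_im, Complex.sq_norm, Complex.sq_norm, div_sub_div_same]
  congr 1
  simp only [normSq_apply, mul_re, mul_im, I_re, I_im, add_re, add_im, one_re, one_im, sub_re,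
    sub_im]
  ring

theorem invCayley_eq_I_iff {z : ℂ} (hz : z ≠ 1) : invCayley z = I ↔ z = 0 := by
  rw [invCayley, div_eq_iff (sub_ne_zero.2 hz.symm)]
  constructor <;> intro h
  · linear_combination -I * h / 2 + z * I_sq
  · rw [h]; ring

theorem invCayley_mapsTo :
    MapsTo invCayley (ball 0 1 \ {0}) ({z : ℂ | 0 < z.im} \ {I}) := by
  rintro z ⟨hz1, hz0⟩
  rw [mem_ball_zero_iff] at hz1
  have hz : z ≠ 1 := by rintro rfl; simp at hz1
  refine ⟨?_, fun h => hz0 ((invCayley_eq_I_iff hz).1 h)⟩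
  show 0 < (invCayley z).im
  rw [im_invCayley]
  have : 0 < ‖1 - z‖ := norm_pos_iff.2 (sub_ne_zero.2 hz.symm)
  have : ‖z‖ ^ 2 < 1 := by nlinarith [norm_nonneg z]
  exact div_pos (by linarith) (by positivity)

theorem frontier_upperHalfPlane_diff_I :
    frontier ({z : ℂ | 0 < z.im} \ {I}) = insert I {z : ℂ | z.im = 0} := by
  rw [(isOpen_lt continuous_const continuous_im).frontier_diff_singleton (by simp),
    frontier_setOfPred_lt_im]

theorem frontier_upperHalfPlane_diff_I_subset_image :
    frontier ({z : ℂ | 0 < z.im} \ {I}) ⊆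
      invCayley '' (frontier (ball (0 : ℂ) 1 \ {0}) \ {1}) := by
  rw [frontier_upperHalfPlane_diff_I, frontier_ball_diff_center 0 one_pos]
  rintro w (rfl | hw)
  · exact ⟨0, ⟨mem_insert _ _, zero_ne_one⟩, by simp [invCayley]⟩
  replace hw : w.im = 0 := hw
  have hw' : w + I ≠ 0 := fun h => by simpa [hw] using congrArg im h
  have hconj : w - I = starRingEnd ℂ (w + I) := by apply Complex.ext <;> simp [hw]
  refine ⟨(w - I) / (w + I), ⟨mem_insert_of_mem _ ?_, ?_⟩, ?_⟩
  · rw [mem_sphere_zero_iff_norm, norm_div, hconj, norm_conj, div_self (norm_ne_zero_iff.2 hw')]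
  · rw [mem_singleton_iff, div_eq_one_iff_eq hw']
    intro h
    linarith [congrArg im h, sub_im w I, add_im w I, I_im]
  · rw [invCayley]
    field_simp
    ring

theorem infDist_invCayley_pos {z : ℂ} (hz : z ∈ ball (0 : ℂ) 1 \ {0}) :
    0 < infDist (invCayley z) (frontier ({w : ℂ | 0 < w.im} \ {I})) :=
  ((isOpen_lt continuous_const continuous_im).sdiff isClosed_singleton).infDist_frontier_pos
    (invCayley_mapsTo hz) ⟨0, by simp [frontier_upperHalfPlane_diff_I]⟩

theorem infDist_invCayley_ofReal_le {u : ℝ} (hu : -1 < u) (hu1 : u < 1) :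
    infDist (invCayley u) (frontier ({w : ℂ | 0 < w.im} \ {I})) ≤ (1 + u) / (1 - u) := by
  refine (infDist_le_dist_of_mem (y := 0) (by simp [frontier_upperHalfPlane_diff_I])).trans_eq ?_
  rw [invCayley_ofReal, dist_zero_right, norm_mul, norm_I, mul_one, norm_real, Real.norm_eq_abs,
    abs_of_pos (div_pos (by linarith) (by linarith))]

theorem jdist_invCayley_le {x y : ℂ} (hx : x ∈ ball (0 : ℂ) 1 \ {0})
    (hy : y ∈ ball (0 : ℂ) 1 \ {0}) :
    jdist ({z : ℂ | 0 < z.im} \ {I}) (invCayley x) (invCayley y) ≤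
      2 * jdist (ball (0 : ℂ) 1 \ {0}) x y := by
  have hfr := frontier_ball_diff_center (0 : ℂ) one_pos
  have hpos : ∀ z ∈ ball (0 : ℂ) 1 \ {0}, 0 < infDist z (frontier (ball (0 : ℂ) 1 \ {0})) :=
    fun z hz => (isOpen_ball.sdiff isClosed_singleton).infDist_frontier_pos hz ⟨0, by simp [hfr]⟩
  exact jdist_image_le_two_mul_jdist invCayley_preservesCrossRatioWithPole (by simp [hfr])
    frontier_upperHalfPlane_diff_I_subset_image (hpos x hx) (hpos y hy)

theorem jdist_ofReal_neg_le {t : ℝ} (ht : 1 / 2 ≤ t) (ht1 : t < 1) :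
    jdist (ball (0 : ℂ) 1 \ {0}) t (-t) ≤ Real.log ((1 + t) / (1 - t)) := by
  have hnorm : ‖(t : ℂ)‖ = t := by simp [abs_of_pos (by linarith : 0 < t)]
  have hmin := min_eq_left (show 1 - t ≤ t by linarith)
  have hD : 1 - t ≤ min (infDist (t : ℂ) (frontier (ball 0 1 \ {0})))
      (infDist (-(t : ℂ)) (frontier (ball 0 1 \ {0}))) := by
    refine le_min ?_ ?_
    · simpa only [hnorm, hmin] using min_sub_norm_norm_le_infDist_frontier one_pos (t : ℂ)
    · simpa only [norm_neg, hnorm, hmin] using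
        min_sub_norm_norm_le_infDist_frontier one_pos (-(t : ℂ))
  have hdist : dist (t : ℂ) (-t) = 2 * t := by
    rw [dist_eq_norm, sub_neg_eq_add, ← two_mul, norm_mul, hnorm]
    norm_num
  have hsub : 0 < 1 - t := by linarith
  have hDpos := hsub.trans_le hD
  calc jdist (ball (0 : ℂ) 1 \ {0}) t (-t) ≤ Real.log (1 + 2 * t / (1 - t)) := by
        rw [jdist, hdist]
        gcongr
    _ = Real.log ((1 + t) / (1 - t)) := by
        congr 1
        field_simp
        ring

theorem log_sq_le_jdist_invCayley_ofReal_neg {t : ℝ} (ht : 0 < t) (ht1 : t < 1) :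
    Real.log (((1 + t) / (1 - t)) ^ 2) ≤
      jdist ({z : ℂ | 0 < z.im} \ {I}) (invCayley t) (invCayley (-t)) := by
  have hnorm : ‖(t : ℂ)‖ = t := by simp [abs_of_pos ht]
  have hsub : 1 - t ≠ 0 := by linarith
  have hadd : 1 + t ≠ 0 := by linarith
  have hpos : 0 < min (infDist (invCayley t) (frontier ({z : ℂ | 0 < z.im} \ {I})))
      (infDist (invCayley (-t)) (frontier ({z : ℂ | 0 < z.im} \ {I}))) :=
    lt_min (infDist_invCayley_pos ⟨by rwa [mem_ball_zero_iff, hnorm], by simpa using ht.ne'⟩)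
      (infDist_invCayley_pos ⟨by rwa [mem_ball_zero_iff, norm_neg, hnorm], by simpa using ht.ne'⟩)
  have hH : min (infDist (invCayley t) (frontier ({z : ℂ | 0 < z.im} \ {I})))
      (infDist (invCayley (-t)) (frontier ({z : ℂ | 0 < z.im} \ {I}))) ≤ (1 - t) / (1 + t) := by
    have := infDist_invCayley_ofReal_le (u := -t) (by linarith) (by linarith)
    rw [ofReal_neg, sub_neg_eq_add, ← sub_eq_add_neg] at this
    exact min_le_of_right_le this
  have hdist : dist (invCayley t) (invCayley (-t)) = 4 * t / ((1 - t) * (1 + t)) := by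
    rw [← ofReal_neg, invCayley_ofReal, invCayley_ofReal, dist_eq_norm, ← sub_mul, ← ofReal_sub,
      norm_mul, norm_I, mul_one, norm_real, Real.norm_eq_abs, abs_of_pos]
    · rw [sub_neg_eq_add, ← sub_eq_add_neg]
      field_simp
      ring
    · rw [sub_pos, div_lt_div_iff₀ (by linarith) (by linarith)]
      nlinarith
  calc Real.log (((1 + t) / (1 - t)) ^ 2)
      = Real.log (1 + 4 * t / ((1 - t) * (1 + t)) / ((1 - t) / (1 + t))) := by
        congr 1
        field_simp
        ring
    _ ≤ _ := by
        rw [jdist, hdist]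
        gcongr

theorem jdist_invCayley_ofReal_neg {t : ℝ} (ht : 1 / 2 ≤ t) (ht1 : t < 1) :
    jdist ({z : ℂ | 0 < z.im} \ {I}) (invCayley t) (invCayley (-t)) =
      2 * jdist (ball (0 : ℂ) 1 \ {0}) t (-t) := by
  have ht0 : 0 < t := by linarith
  have hnorm : ‖(t : ℂ)‖ = t := by simp [abs_of_pos ht0]
  refine le_antisymm (jdist_invCayley_le ?_ ?_) ?_
  · exact ⟨by rwa [mem_ball_zero_iff, hnorm], by simpa using ht0.ne'⟩
  · exact ⟨by rwa [mem_ball_zero_iff, norm_neg, hnorm], by simpa using ht0.ne'⟩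
  calc 2 * jdist (ball (0 : ℂ) 1 \ {0}) t (-t) ≤ 2 * Real.log ((1 + t) / (1 - t)) := by
        gcongr
        exact jdist_ofReal_neg_le ht ht1
    _ = Real.log (((1 + t) / (1 - t)) ^ 2) := by rw [Real.log_pow]; norm_num
    _ ≤ _ := log_sq_le_jdist_invCayley_ofReal_neg ht0 ht1

/-- For `f(z) = i(1+z)/(1-z) : 𝔻 \ {0} → ℍ² \ {i}` the inequality
`j_{ℍ²∖{i}}(f x, f y) ≤ 2 j_{𝔻∖{0}}(x, y)` holds, and the constant `2` is
best possible: for `x = t`, `y = -t`, `1/2 < t < 1`, equality holds. -/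
theorem inverse_cayley_punctured_jdist_sharp (f : ℂ → ℂ)
    (hf : ∀ z, f z = Complex.I * (1 + z) / (1 - z)) :
    (∀ x ∈ Metric.ball (0 : ℂ) 1 \ {0}, ∀ y ∈ Metric.ball (0 : ℂ) 1 \ {0},
        jdist ({z : ℂ | 0 < z.im} \ {Complex.I}) (f x) (f y) ≤
          2 * jdist (Metric.ball (0 : ℂ) 1 \ {0}) x y) ∧
      ∀ t : ℝ, 1 / 2 < t → t < 1 →
        jdist ({z : ℂ | 0 < z.im} \ {Complex.I}) (f (t : ℂ)) (f (-(t : ℂ))) =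
          2 * jdist (Metric.ball (0 : ℂ) 1 \ {0}) (t : ℂ) (-(t : ℂ)) := by
  obtain rfl : f = invCayley := funext hf
  exact ⟨fun x hx y hy => jdist_invCayley_le hx hy,
    fun t ht ht1 => jdist_invCayley_ofReal_neg ht.le ht1⟩
end

section
/- Let a ∈ ℍ², let α ∈ ℝ, and let f : ℍ² → 𝔻 be the Möbius transformation f(z) = e^{iα}(z − a)/(z − ā), which maps ℍ² onto 𝔻 with f(a) = 0. Then for all x, y ∈ ℍ²: (1/2) · j_{ℍ²}(x, y) ≤ j_𝔻(f(x), f(y)) ≤ 2 · j_{ℍ²}(x, y). -/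
/-!
Both distance ratio metrics are comparable with the hyperbolic metric `ρ`: writing
`ρ = 2 arsinh R`, where `R = sinh (ρ / 2)` is `|x - y| / (2 √(Im x Im y))` on `ℍ²` and
`|z - w| / √((1 - |z|²) (1 - |w|²))` on `𝔻`, one has `ρ / 2 ≤ j ≤ ρ` on either domain. A Möbius map
`ℍ² → 𝔻` is a hyperbolic isometry, i.e. it preserves `R`, so
`j_𝔻 (f x, f y) ≤ ρ ≤ 2 j_ℍ² (x, y)` and `j_ℍ² (x, y) ≤ ρ ≤ 2 j_𝔻 (f x, f y)`.
-/

open Metric Filter Topology Set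

open Real ComplexConjugate

theorem Real.arsinh_le_log {R x : ℝ} (hx : 0 < x) (h : R ≤ (x - x⁻¹) / 2) :
    arsinh R ≤ log x := by
  rwa [← arsinh_sinh (log x), arsinh_le_arsinh, sinh_log hx]

theorem Real.log_le_arsinh {R x : ℝ} (hx : 0 < x) (h : (x - x⁻¹) / 2 ≤ R) :
    log x ≤ arsinh R := by
  rwa [← arsinh_sinh (log x), arsinh_le_arsinh, sinh_log hx]

theorem Real.log_le_two_mul_arsinh {R x : ℝ} (hx : 1 ≤ x) (hR : 0 ≤ R)
    (h : (x - 1) ^ 2 ≤ 4 * R ^ 2 * x) : log x ≤ 2 * arsinh R := by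
  have hu : 0 < √x := by positivity
  have hux : √x ^ 2 = x := sq_sqrt (by linarith)
  have hsinh : (√x - (√x)⁻¹) / 2 ≤ R := by
    have key : x - 1 ≤ 2 * R * √x := le_of_sq_le_sq (by nlinarith) (by positivity)
    have hsub : √x - (√x)⁻¹ = (x - 1) / √x := by field_simp; rw [hux]
    rw [hsub, div_div, div_le_iff₀ (by positivity)]
    linarith
  have hlog := log_le_arsinh hu hsinh
  rw [log_sqrt (by linarith)] at hlog
  linarith

theorem Real.arsinh_half_le_log_one_add {t : ℝ} (ht : 0 ≤ t) :
    arsinh (t / 2) ≤ log (1 + t) := by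
  refine arsinh_le_log (by linarith) ?_
  have : (1 + t)⁻¹ ≤ 1 := inv_le_one_of_one_le₀ (by linarith)
  linarith

theorem jdist_comm {E : Type*} [PseudoMetricSpace E] (G : Set E) (x y : E) :
    jdist G x y = jdist G y x := by
  rw [jdist, jdist, dist_comm, min_comm]

theorem Complex.infDist_setOf_im_eq_zero_s6 {x : ℂ} (hx : 0 ≤ x.im) :
    infDist x {z : ℂ | z.im = 0} = x.im := by
  refine le_antisymm ?_
    ((le_infDist (x := x) ⟨0, Complex.zero_im⟩).2 fun (z : ℂ) (hz : z.im = 0) => ?_)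
  · calc infDist x {z : ℂ | z.im = 0} ≤ dist x (x.re : ℂ) :=
          infDist_le_dist_of_mem (Complex.ofReal_im _)
      _ = x.im := by
          rw [Complex.dist_eq, Complex.norm_def, Complex.normSq_apply]
          simp [← sq, Real.sqrt_sq hx]
  · calc x.im ≤ |(x - z).im| := by rw [Complex.sub_im, hz, sub_zero]; exact le_abs_self _
      _ ≤ dist x z := (Complex.abs_im_le_norm _).trans_eq (Complex.dist_eq x z).symm

theorem Complex.infDist_sphere_zero_one {w : ℂ} (hw : ‖w‖ ≤ 1) :
    infDist w (sphere (0 : ℂ) 1) = 1 - ‖w‖ := by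
  refine le_antisymm ?_ ((le_infDist ⟨1, by simp⟩).2 fun z hz => ?_)
  · rcases eq_or_ne w 0 with rfl | hw0
    · simpa using infDist_le_dist_of_mem (x := (0 : ℂ)) (show (1 : ℂ) ∈ sphere 0 1 by simp)
    · have hmem : (‖w‖⁻¹ : ℂ) * w ∈ sphere (0 : ℂ) 1 := by simp [hw0]
      refine (infDist_le_dist_of_mem hmem).trans_eq ?_
      have hinv : 1 - ‖w‖⁻¹ ≤ 0 := sub_nonpos.2 (one_le_inv₀ (norm_pos_iff.2 hw0) |>.2 hw)
      rw [Complex.dist_eq, ← one_sub_mul, norm_mul, ← Complex.ofReal_one, ← Complex.ofReal_inv,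
        ← Complex.ofReal_sub, Complex.norm_real, Real.norm_eq_abs, abs_of_nonpos hinv]
      field_simp
      ring
  · rw [mem_sphere_zero_iff_norm] at hz
    calc 1 - ‖w‖ = ‖z‖ - ‖w‖ := by rw [hz]
      _ ≤ dist w z := by rw [dist_comm, Complex.dist_eq]; exact norm_sub_norm_le z w

theorem jdist_upperHalfPlane {x y : ℂ} (hx : 0 ≤ x.im) (hy : 0 ≤ y.im) :
    jdist {z : ℂ | 0 < z.im} x y = log (1 + dist x y / min x.im y.im) := by
  rw [jdist, Complex.frontier_setOfPred_lt_im, Complex.infDist_setOf_im_eq_zero_s6 hx,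
    Complex.infDist_setOf_im_eq_zero_s6 hy]

theorem jdist_ball_zero_one {z w : ℂ} (hz : ‖z‖ ≤ 1) (hw : ‖w‖ ≤ 1) :
    jdist (ball (0 : ℂ) 1) z w = log (1 + dist z w / min (1 - ‖z‖) (1 - ‖w‖)) := by
  rw [jdist, frontier_ball (0 : ℂ) one_ne_zero, Complex.infDist_sphere_zero_one hz,
    Complex.infDist_sphere_zero_one hw]

/-- `sinh (ρ / 2)` for the hyperbolic distance `ρ` of the upper half plane,
cf. `UpperHalfPlane.sinh_half_dist`. -/
noncomputable def upperHalfPlaneSinhHalfDist (x y : ℂ) : ℝ := dist x y / (2 * √(x.im * y.im))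

/-- `sinh (ρ / 2)` for the hyperbolic distance `ρ` of the unit disc. -/
noncomputable def unitDiscSinhHalfDist (z w : ℂ) : ℝ :=
  dist z w / √((1 - ‖z‖ ^ 2) * (1 - ‖w‖ ^ 2))

section UpperHalfPlane

variable {x y : ℂ}

theorem upperHalfPlaneSinhHalfDist_comm (x y : ℂ) :
    upperHalfPlaneSinhHalfDist x y = upperHalfPlaneSinhHalfDist y x := by
  rw [upperHalfPlaneSinhHalfDist, upperHalfPlaneSinhHalfDist, dist_comm, mul_comm x.im]

theorem arsinh_upperHalfPlaneSinhHalfDist_le_log (hx : 0 < x.im) (hxy : x.im ≤ y.im) :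
    arsinh (upperHalfPlaneSinhHalfDist x y) ≤ log (1 + dist x y / x.im) := by
  refine (arsinh_le_arsinh.2 ?_).trans (arsinh_half_le_log_one_add (by positivity))
  have : x.im ≤ √(x.im * y.im) := le_sqrt_of_sq_le (by nlinarith)
  rw [upperHalfPlaneSinhHalfDist, div_div]
  exact div_le_div_of_nonneg_left dist_nonneg (by positivity) (by linarith)

theorem log_le_two_mul_arsinh_upperHalfPlaneSinhHalfDist (hx : 0 < x.im) (hxy : x.im ≤ y.im) :
    log (1 + dist x y / x.im) ≤ 2 * arsinh (upperHalfPlaneSinhHalfDist x y) := by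
  have hy : 0 < y.im := hx.trans_le hxy
  have him : y.im ≤ x.im + dist x y := by
    have := (le_abs_self _).trans (Complex.abs_im_le_norm (y - x))
    rw [Complex.sub_im, ← Complex.dist_eq, dist_comm] at this
    linarith
  refine log_le_two_mul_arsinh (le_add_of_nonneg_right (by positivity))
    (by unfold upperHalfPlaneSinhHalfDist; positivity) ?_
  rw [upperHalfPlaneSinhHalfDist, div_pow, mul_pow, sq_sqrt (by positivity)]
  field_simp
  nlinarith [sq_nonneg (dist x y)]

theorem jdist_upperHalfPlane_mem_Icc (hx : 0 < x.im) (hy : 0 < y.im) :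
    jdist {z : ℂ | 0 < z.im} x y ∈
      Icc (arsinh (upperHalfPlaneSinhHalfDist x y))
        (2 * arsinh (upperHalfPlaneSinhHalfDist x y)) := by
  wlog hxy : x.im ≤ y.im generalizing x y
  · rw [jdist_comm, upperHalfPlaneSinhHalfDist_comm]
    exact this hy hx (le_of_not_ge hxy)
  rw [jdist_upperHalfPlane hx.le hy.le, min_eq_left hxy]
  exact ⟨arsinh_upperHalfPlaneSinhHalfDist_le_log hx hxy,
    log_le_two_mul_arsinh_upperHalfPlaneSinhHalfDist hx hxy⟩

end UpperHalfPlane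

section UnitDisc

variable {z w : ℂ}

theorem unitDiscSinhHalfDist_comm (z w : ℂ) :
    unitDiscSinhHalfDist z w = unitDiscSinhHalfDist w z := by
  rw [unitDiscSinhHalfDist, unitDiscSinhHalfDist, dist_comm, mul_comm (1 - ‖z‖ ^ 2)]

theorem arsinh_unitDiscSinhHalfDist_le_log (hz : ‖z‖ < 1) (hwz : ‖w‖ ≤ ‖z‖) :
    arsinh (unitDiscSinhHalfDist z w) ≤ log (1 + dist z w / (1 - ‖z‖)) := by
  have hd : dist z w ≤ 2 * ‖z‖ := by
    have := dist_le_norm_add_norm z w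
    linarith
  have hp : 0 < 1 - ‖z‖ := by linarith
  have hz2 : 0 < 1 - ‖z‖ ^ 2 := by nlinarith [norm_nonneg z]
  have hroot : 1 - ‖z‖ ^ 2 ≤ √((1 - ‖z‖ ^ 2) * (1 - ‖w‖ ^ 2)) := by
    refine le_sqrt_of_sq_le ?_
    rw [sq]
    exact mul_le_mul_of_nonneg_left (by nlinarith [norm_nonneg w]) hz2.le
  refine arsinh_le_log (add_pos_of_pos_of_nonneg one_pos (div_nonneg dist_nonneg hp.le))
    ((div_le_div_of_nonneg_left dist_nonneg hz2 hroot).trans ?_)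
  field_simp
  -- the two sides differ by `(1 - ‖z‖)² · dist z w · (2 ‖z‖ - dist z w)`
  nlinarith [mul_nonneg (mul_nonneg (sq_nonneg (1 - ‖z‖)) (dist_nonneg : 0 ≤ dist z w))
    (sub_nonneg.2 hd)]

theorem log_le_two_mul_arsinh_unitDiscSinhHalfDist (hz : ‖z‖ < 1) (hwz : ‖w‖ ≤ ‖z‖) :
    log (1 + dist z w / (1 - ‖z‖)) ≤ 2 * arsinh (unitDiscSinhHalfDist z w) := by
  have hp : 0 < 1 - ‖z‖ := by linarith
  have hd : ‖z‖ - ‖w‖ ≤ dist z w := by rw [Complex.dist_eq]; exact norm_sub_norm_le z w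
  have hP : 0 < (1 - ‖z‖ ^ 2) * (1 - ‖w‖ ^ 2) := by
    apply mul_pos <;> nlinarith [norm_nonneg w, norm_nonneg z]
  have hP4 : (1 - ‖z‖ ^ 2) * (1 - ‖w‖ ^ 2) ≤ 4 * (1 - ‖z‖) * (1 - ‖z‖ + dist z w) := by
    have h1 : (1 + ‖z‖) * (1 + ‖w‖) ≤ 4 := by nlinarith [norm_nonneg w]
    have h2 : 1 - ‖w‖ ≤ 1 - ‖z‖ + dist z w := by linarith
    calc (1 - ‖z‖ ^ 2) * (1 - ‖w‖ ^ 2)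
        = (1 - ‖z‖) * ((1 + ‖z‖) * (1 + ‖w‖)) * (1 - ‖w‖) := by ring
      _ ≤ (1 - ‖z‖) * 4 * (1 - ‖z‖ + dist z w) := by gcongr; linarith
      _ = _ := by ring
  refine log_le_two_mul_arsinh (le_add_of_nonneg_right (div_nonneg dist_nonneg hp.le))
    (div_nonneg dist_nonneg (sqrt_nonneg _)) ?_
  rw [add_sub_cancel_left, unitDiscSinhHalfDist, div_pow, div_pow, sq_sqrt hP.le,
    div_le_iff₀ (by positivity)]
  have hrhs : 4 * (dist z w ^ 2 / ((1 - ‖z‖ ^ 2) * (1 - ‖w‖ ^ 2))) *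
      (1 + dist z w / (1 - ‖z‖)) * (1 - ‖z‖) ^ 2 =
      dist z w ^ 2 * (4 * (1 - ‖z‖) * (1 - ‖z‖ + dist z w)) /
        ((1 - ‖z‖ ^ 2) * (1 - ‖w‖ ^ 2)) := by
    field_simp
  rw [hrhs, le_div_iff₀ hP]
  exact mul_le_mul_of_nonneg_left hP4 (sq_nonneg _)

theorem jdist_unitDisc_mem_Icc (hz : ‖z‖ < 1) (hw : ‖w‖ < 1) :
    jdist (ball (0 : ℂ) 1) z w ∈
      Icc (arsinh (unitDiscSinhHalfDist z w)) (2 * arsinh (unitDiscSinhHalfDist z w)) := by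
  wlog hwz : ‖w‖ ≤ ‖z‖ generalizing z w
  · rw [jdist_comm, unitDiscSinhHalfDist_comm]
    exact this hw hz (le_of_not_ge hwz)
  rw [jdist_ball_zero_one hz.le hw.le, min_eq_left (by linarith)]
  exact ⟨arsinh_unitDiscSinhHalfDist_le_log hz hwz,
    log_le_two_mul_arsinh_unitDiscSinhHalfDist hz hwz⟩

end UnitDisc

noncomputable def mobiusToDisc (α : ℝ) (a z : ℂ) : ℂ :=
  Complex.exp (α * Complex.I) * (z - a) / (z - conj a)

section Mobius

open Complex

variable {a z : ℂ}

theorem sub_conj_ne_zero (ha : 0 < a.im) (hz : 0 < z.im) : z - conj a ≠ 0 := fun h => by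
  have := congrArg im h
  simp only [sub_im, conj_im, sub_neg_eq_add, zero_im] at this
  linarith

theorem norm_sub_conj_sq (z a : ℂ) : ‖z - conj a‖ ^ 2 = ‖z - a‖ ^ 2 + 4 * z.im * a.im := by
  simp only [Complex.sq_norm, normSq_apply, sub_re, sub_im, conj_re, conj_im]
  ring

theorem norm_mobiusToDisc (α : ℝ) (a z : ℂ) :
    ‖mobiusToDisc α a z‖ = ‖z - a‖ / ‖z - conj a‖ := by
  rw [mobiusToDisc, norm_div, norm_mul, norm_exp_ofReal_mul_I, one_mul]

theorem one_sub_norm_mobiusToDisc_sq (α : ℝ) (ha : 0 < a.im) (hz : 0 < z.im) :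
    1 - ‖mobiusToDisc α a z‖ ^ 2 = 4 * z.im * a.im / ‖z - conj a‖ ^ 2 := by
  have hA : ‖z - conj a‖ ^ 2 ≠ 0 := pow_ne_zero 2 (norm_ne_zero_iff.2 (sub_conj_ne_zero ha hz))
  rw [norm_mobiusToDisc, div_pow, eq_div_iff hA, sub_mul, one_mul, div_mul_cancel₀ _ hA,
    norm_sub_conj_sq]
  ring

theorem norm_mobiusToDisc_lt_one (α : ℝ) (ha : 0 < a.im) (hz : 0 < z.im) :
    ‖mobiusToDisc α a z‖ < 1 := by
  have hpos : 0 < 1 - ‖mobiusToDisc α a z‖ ^ 2 := by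
    rw [one_sub_norm_mobiusToDisc_sq α ha hz]
    exact div_pos (by positivity) (pow_pos (norm_pos_iff.2 (sub_conj_ne_zero ha hz)) 2)
  nlinarith [norm_nonneg (mobiusToDisc α a z)]

theorem dist_mobiusToDisc (α : ℝ) {x y : ℂ} (ha : 0 < a.im) (hx : 0 < x.im) (hy : 0 < y.im) :
    dist (mobiusToDisc α a x) (mobiusToDisc α a y) =
      2 * a.im * dist x y / (‖x - conj a‖ * ‖y - conj a‖) := by
  have hdiff : mobiusToDisc α a x - mobiusToDisc α a y =
      exp (α * I) * ((a - conj a) * (x - y)) / ((x - conj a) * (y - conj a)) := by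
    rw [mobiusToDisc, mobiusToDisc,
      div_sub_div _ _ (sub_conj_ne_zero ha hx) (sub_conj_ne_zero ha hy)]
    ring
  have hconj : ‖a - conj a‖ = 2 * a.im := by
    rw [sub_conj, norm_mul, norm_real, norm_I, mul_one, Real.norm_of_nonneg (by positivity)]
  rw [Complex.dist_eq, hdiff, norm_div, norm_mul, norm_mul, norm_mul, norm_exp_ofReal_mul_I,
    hconj, one_mul, Complex.dist_eq]

theorem unitDiscSinhHalfDist_mobiusToDisc (α : ℝ) {x y : ℂ} (ha : 0 < a.im) (hx : 0 < x.im)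
    (hy : 0 < y.im) :
    unitDiscSinhHalfDist (mobiusToDisc α a x) (mobiusToDisc α a y) =
      upperHalfPlaneSinhHalfDist x y := by
  have hA : 0 < ‖x - conj a‖ := norm_pos_iff.2 (sub_conj_ne_zero ha hx)
  have hB : 0 < ‖y - conj a‖ := norm_pos_iff.2 (sub_conj_ne_zero ha hy)
  have hroot : √((1 - ‖mobiusToDisc α a x‖ ^ 2) * (1 - ‖mobiusToDisc α a y‖ ^ 2)) =
      4 * a.im / (‖x - conj a‖ * ‖y - conj a‖) * √(x.im * y.im) := by
    rw [one_sub_norm_mobiusToDisc_sq α ha hx, one_sub_norm_mobiusToDisc_sq α ha hy,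
      ← sqrt_sq (by positivity : 0 ≤ 4 * a.im / (‖x - conj a‖ * ‖y - conj a‖)),
      ← sqrt_mul (sq_nonneg _)]
    congr 1
    field_simp
  have hxy : 0 < √(x.im * y.im) := sqrt_pos.2 (mul_pos hx hy)
  rw [unitDiscSinhHalfDist, upperHalfPlaneSinhHalfDist, dist_mobiusToDisc α ha hx hy, hroot]
  field_simp
  ring

end Mobius

/-- Any Möbius transformation `f(z) = e^{iα}(z-a)/(z-ā)` of the upper half
plane onto the unit disk with `f(a) = 0` is `2`-bilipschitz with respect to
the distance ratio metrics. -/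
theorem mobius_halfplane_to_disk_jdist_bilipschitz (a : ℂ) (ha : 0 < a.im) (α : ℝ)
    (f : ℂ → ℂ)
    (hf : ∀ z, f z = Complex.exp (α * Complex.I) * (z - a) / (z - (starRingEnd ℂ) a)) :
    ∀ x ∈ {z : ℂ | 0 < z.im}, ∀ y ∈ {z : ℂ | 0 < z.im},
      (1 / 2) * jdist {z : ℂ | 0 < z.im} x y ≤
          jdist (Metric.ball (0 : ℂ) 1) (f x) (f y) ∧
        jdist (Metric.ball (0 : ℂ) 1) (f x) (f y) ≤ 2 * jdist {z : ℂ | 0 < z.im} x y := by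
  obtain rfl : f = mobiusToDisc α a := funext hf
  intro x hx y hy
  have hH := jdist_upperHalfPlane_mem_Icc hx hy
  have hD := jdist_unitDisc_mem_Icc (norm_mobiusToDisc_lt_one α ha hx)
    (norm_mobiusToDisc_lt_one α ha hy)
  rw [unitDiscSinhHalfDist_mobiusToDisc α ha hx hy] at hD
  constructor <;> linarith [hH.1, hH.2, hD.1, hD.2]
end

section
/- Let k ∈ (1, ∞) and θ ∈ (0, π/(2k)). Then the function f₃(r) = log(1 + (1 − r^k)/(r^k sin kθ)) / log(1 + (1 − r)/(r sin θ)) is strictly decreasing on (0, 1), with f₃(r) → k as r → 0⁺ and f₃(r) → (k sin θ)/(sin kθ) as r → 1⁻. -/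
/-!
Write `f₃ = F / G` with `F r = logTerm a (r ^ k)`, `G r = logTerm b r`, `a = sin kθ`, `b = sin θ`.
Both vanish at `r = 1`, and `F' / G' = k (1 - (1 - b) r) / (1 - (1 - a) r ^ k)`. By weighted AM–GM
this ratio is strictly decreasing on `(0, 1)` as soon as `k (1 - a) b ≤ a (1 - b)`, which is the
statement that `t ↦ t / sin t - t` decreases on `(0, π/2]`, compared at `θ` and `kθ`. The monotone
form of l'Hôpital's rule then makes `f₃` strictly decreasing, the usual one gives the limit
`(F' / G') 1 = k b / a` at `1`, and near `0` the functions `F` and `G` are bounded perturbations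
of `-k log r` and `-log r`.
-/

open Real Filter Topology Set

theorem StrictAntiOn.div_of_deriv_div {f g f' g' : ℝ → ℝ} {a b : ℝ}
    (hf : ContinuousOn f (Ioc a b)) (hg : ContinuousOn g (Ioc a b))
    (hff' : ∀ x ∈ Ioo a b, HasDerivAt f (f' x) x) (hgg' : ∀ x ∈ Ioo a b, HasDerivAt g (g' x) x)
    (hg'_neg : ∀ x ∈ Ioo a b, g' x < 0) (hfb : f b = 0) (hgb : g b = 0)
    (hanti : StrictAntiOn (fun x => f' x / g' x) (Ioo a b)) :
    StrictAntiOn (fun x => f x / g x) (Ioo a b) := by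
  have hg_anti : StrictAntiOn g (Ioc a b) :=
    strictAntiOn_of_hasDerivWithinAt_neg (convex_Ioc a b) hg
      (fun x hx => (hgg' x (by simpa using hx)).hasDerivWithinAt)
      (fun x hx => hg'_neg x (by simpa using hx))
  have cauchy : ∀ x y, a < x → x < y → y ≤ b →
      ∃ ξ ∈ Ioo x y, f y - f x = f' ξ / g' ξ * (g y - g x) := by
    intro x y hax hxy hyb
    have hsub : Icc x y ⊆ Ioc a b := Icc_subset_Ioc hax hyb
    obtain ⟨ξ, hξ, h⟩ := exists_ratio_hasDerivAt_eq_ratio_slope f f' hxy (hf.mono hsub)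
      (fun z hz => hff' z ⟨hax.trans hz.1, hz.2.trans_le hyb⟩) g g' (hg.mono hsub)
      (fun z hz => hgg' z ⟨hax.trans hz.1, hz.2.trans_le hyb⟩)
    have hne := (hg'_neg ξ ⟨hax.trans hξ.1, hξ.2.trans_le hyb⟩).ne
    exact ⟨ξ, hξ, by field_simp; linarith⟩
  intro x hx y hy hxy
  have hgy : 0 < g y := hgb ▸ hg_anti ⟨hy.1, hy.2.le⟩ ⟨hy.1.trans hy.2, le_rfl⟩ hy.2
  have hgxy : g y < g x := hg_anti ⟨hx.1, hx.2.le⟩ ⟨hy.1, hy.2.le⟩ hxy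
  obtain ⟨η, hη, hfy⟩ := cauchy y b hy.1 hy.2 le_rfl
  obtain ⟨ξ, hξ, hfxy⟩ := cauchy x y hx.1 hxy hy.2.le
  rw [hfb, hgb] at hfy
  have hQ : f' η / g' η < f' ξ / g' ξ :=
    hanti ⟨hx.1.trans hξ.1, hξ.2.trans hy.2⟩ ⟨hy.1.trans hη.1, hη.2⟩ (hξ.2.trans hη.1)
  -- `f x / g x` is a proper convex combination of the two slopes `f' ξ / g' ξ > f' η / g' η`.
  rw [div_lt_div_iff₀ hgy (hgy.trans hgxy)]
  nlinarith [mul_pos (sub_pos.2 hQ) (mul_pos hgy (sub_pos.2 hgxy))]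

theorem Filter.Tendsto.add_mul_div_add_mul_of_tendsto_atTop {α : Type*} {l : Filter α}
    {u v L : α → ℝ} {c d p q : ℝ} (hu : Tendsto u l (𝓝 c)) (hv : Tendsto v l (𝓝 d))
    (hL : Tendsto L l atTop) (hq : q ≠ 0) :
    Tendsto (fun x => (u x + p * L x) / (v x + q * L x)) l (𝓝 (p / q)) := by
  have h := ((hu.div_atTop hL).add_const p).div ((hv.div_atTop hL).add_const q) (by simpa)
  rw [zero_add, zero_add] at h
  refine h.congr' ?_
  filter_upwards [hL.eventually_gt_atTop 0] with x hx
  simp only [Pi.div_apply]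
  field_simp

theorem antitoneOn_div_sin_sub : AntitoneOn (fun t => t / sin t - t) (Ioc 0 (π / 2)) := by
  have hsin : ∀ t ∈ Ioc 0 (π / 2), 0 < sin t := fun t ht =>
    sin_pos_of_pos_of_lt_pi ht.1 (by linarith [ht.2, pi_pos])
  have hderiv : ∀ t ∈ Ioc 0 (π / 2), HasDerivAt (fun t => t / sin t - t)
      ((1 * sin t - t * cos t) / sin t ^ 2 - 1) t := fun t ht =>
    ((hasDerivAt_id t).div (hasDerivAt_sin t) (hsin t ht).ne').sub (hasDerivAt_id t)
  refine antitoneOn_of_hasDerivWithinAt_nonpos (convex_Ioc 0 (π / 2))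
    (fun t ht => (hderiv t ht).continuousAt.continuousWithinAt)
    (fun t ht => (hderiv t (interior_subset ht)).hasDerivWithinAt) fun t ht => ?_
  rw [interior_Ioc] at ht
  have hs := hsin t (Ioo_subset_Ioc_self ht)
  have hc : 0 < cos t := cos_pos_of_mem_Ioo ⟨by linarith [ht.1, pi_pos], ht.2⟩
  have hst : sin t ≤ t := sin_le ht.1.le
  -- `sin t + cos t ≥ 1` and `sin t ≤ t` give `sin t - t cos t ≤ sin t (1 - cos t) ≤ sin t ^ 2`.
  have hsc : 1 - cos t ≤ sin t := by nlinarith [sin_sq_add_cos_sq t]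
  rw [sub_nonpos, div_le_one (by positivity)]
  nlinarith

theorem mul_one_sub_sin_mul_sin_le {k θ : ℝ} (hk : 1 ≤ k) (hθ : 0 < θ) (hkθ : k * θ ≤ π / 2) :
    k * (1 - sin (k * θ)) * sin θ ≤ sin (k * θ) * (1 - sin θ) := by
  have hθk : θ ≤ k * θ := le_mul_of_one_le_left hθ.le hk
  have hsin : ∀ t, 0 < t → t ≤ π / 2 → 0 < sin t := fun t ht ht' =>
    sin_pos_of_pos_of_lt_pi ht (by linarith [pi_pos])
  have ha := hsin _ (hθ.trans_le hθk) hkθ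
  have hb := hsin _ hθ (hθk.trans hkθ)
  have h := antitoneOn_div_sin_sub ⟨hθ, hθk.trans hkθ⟩ ⟨hθ.trans_le hθk, hkθ⟩ hθk
  simp only at h
  rw [div_sub' ha.ne', div_sub' hb.ne', div_le_div_iff₀ ha hb] at h
  nlinarith

theorem mul_rpow_sub_one_le {k r : ℝ} (hk : 1 ≤ k) (hr : 0 ≤ r) :
    k * r ^ (k - 1) ≤ (k - 1) * r ^ k + 1 := by
  have hk₀ : 0 < k := by linarith
  -- weighted AM–GM for `r ^ k` and `1` with weights `(k - 1) / k` and `1 / k`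
  have h := geom_mean_le_arith_mean2_weighted (div_nonneg (sub_nonneg.2 hk) hk₀.le)
    (one_div_nonneg.2 hk₀.le) (rpow_nonneg hr k) zero_le_one (by field_simp; ring)
  rw [one_rpow, mul_one, ← rpow_mul hr, mul_div_cancel₀ _ hk₀.ne'] at h
  have := mul_le_mul_of_nonneg_left h hk₀.le
  field_simp at this
  linarith

noncomputable def logTerm (a x : ℝ) : ℝ := Real.log (1 + (1 - x) / (x * a))

section LogTerm

variable {a x : ℝ}

@[simp] theorem logTerm_one (a : ℝ) : logTerm a 1 = 0 := by simp [logTerm]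

theorem one_sub_mul_pos (ha : 0 < a) (hx₀ : 0 < x) (hx₁ : x ≤ 1) : 0 < 1 - (1 - a) * x := by
  nlinarith

theorem logTerm_eq (ha : a ≠ 0) (hx : x ≠ 0) (hax : 1 - (1 - a) * x ≠ 0) :
    logTerm a x = Real.log (1 - (1 - a) * x) - Real.log a - Real.log x := by
  have h : 1 + (1 - x) / (x * a) = (1 - (1 - a) * x) / (a * x) := by field_simp; ring
  rw [logTerm, h, Real.log_div hax (mul_ne_zero ha hx), Real.log_mul ha hx]
  ring

theorem hasDerivAt_logTerm (ha : a ≠ 0) (hx : x ≠ 0) (hax : 1 - (1 - a) * x ≠ 0) :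
    HasDerivAt (logTerm a) (-1 / (x * (1 - (1 - a) * x))) x := by
  have hopen : IsOpen {y : ℝ | y ≠ 0 ∧ 1 - (1 - a) * y ≠ 0} :=
    isOpen_ne.inter (isOpen_ne_fun (by fun_prop) continuous_const)
  have hinner : HasDerivAt (fun y => 1 - (1 - a) * y) (-(1 - a)) x := by
    simpa using ((hasDerivAt_id x).const_mul (1 - a)).const_sub 1
  have h := ((hinner.log hax).sub_const (Real.log a)).sub (hasDerivAt_log hx)
  refine (h.congr_of_eventuallyEq ?_).congr_deriv (by field_simp; ring)
  filter_upwards [hopen.mem_nhds ⟨hx, hax⟩] with y hy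
  exact logTerm_eq ha hy.1 hy.2

end LogTerm

section LogTermRatio

variable {k a b r : ℝ}

theorem strictAntiOn_mul_one_sub_div_one_sub_rpow (hk : 1 < k) (ha₀ : 0 < a) (ha₁ : a < 1)
    (hb : 0 < b) (hab : k * (1 - a) * b ≤ a * (1 - b)) :
    StrictAntiOn (fun r => k * (1 - (1 - b) * r) / (1 - (1 - a) * r ^ k)) (Ioo 0 1) := by
  have hD : ∀ r ∈ Ioo (0 : ℝ) 1, 0 < 1 - (1 - a) * r ^ k := fun r hr =>
    one_sub_mul_pos ha₀ (rpow_pos_of_pos hr.1 k) (rpow_le_one hr.1.le hr.2.le (by linarith))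
  have hderiv : ∀ r ∈ Ioo (0 : ℝ) 1, HasDerivAt
      (fun r => k * (1 - (1 - b) * r) / (1 - (1 - a) * r ^ k))
      ((k * -(1 - b) * (1 - (1 - a) * r ^ k)
          - k * (1 - (1 - b) * r) * -((1 - a) * (k * r ^ (k - 1))))
        / (1 - (1 - a) * r ^ k) ^ 2) r := by
    intro r hr
    have hN : HasDerivAt (fun r => k * (1 - (1 - b) * r)) (k * -(1 - b)) r := by
      simpa using (((hasDerivAt_id r).const_mul (1 - b)).const_sub 1).const_mul k
    have hD' : HasDerivAt (fun r => 1 - (1 - a) * r ^ k) (-((1 - a) * (k * r ^ (k - 1)))) r := by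
      simpa using ((hasDerivAt_rpow_const (Or.inl hr.1.ne')).const_mul (1 - a)).const_sub 1
    exact hN.div hD' (hD r hr).ne'
  refine strictAntiOn_of_hasDerivWithinAt_neg (convex_Ioo 0 1)
    (fun r hr => (hderiv r hr).continuousAt.continuousWithinAt)
    (fun r hr => (hderiv r (interior_subset hr)).hasDerivWithinAt) fun r hr => ?_
  rw [interior_Ioo] at hr
  obtain ⟨hr₀, hr₁⟩ := hr
  have hs₁ : r ^ k < 1 := rpow_lt_one hr₀.le hr₁ (by linarith)
  have hrt : r * r ^ (k - 1) = r ^ k := by rw [rpow_sub_one hr₀.ne']; field_simp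
  have hamgm := mul_rpow_sub_one_le hk.le hr₀.le
  have hnum : k * -(1 - b) * (1 - (1 - a) * r ^ k)
        - k * (1 - (1 - b) * r) * -((1 - a) * (k * r ^ (k - 1)))
      = -k * ((1 - b) - (1 - a) * (k * r ^ (k - 1)) + (k - 1) * (1 - a) * (1 - b) * r ^ k) := by
    rw [← hrt]; ring
  have hpos : 0 < (1 - b) - (1 - a) * (k * r ^ (k - 1)) + (k - 1) * (1 - a) * (1 - b) * r ^ k := by
    nlinarith [mul_pos (mul_pos (sub_pos.2 hk) (sub_pos.2 ha₁)) (mul_pos hb (sub_pos.2 hs₁)),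
      mul_le_mul_of_nonneg_left hamgm (sub_pos.2 ha₁).le]
  rw [hnum]
  exact div_neg_of_neg_of_pos (by nlinarith) (pow_pos (hD _ ⟨hr₀, hr₁⟩) 2)

theorem hasDerivAt_logTerm_of_mem_Ioc (ha : 0 < a) (hr : r ∈ Ioc 0 1) :
    HasDerivAt (logTerm a) (-1 / (r * (1 - (1 - a) * r))) r :=
  hasDerivAt_logTerm ha.ne' hr.1.ne' (one_sub_mul_pos ha hr.1 hr.2).ne'

theorem hasDerivAt_logTerm_rpow (hk : 0 < k) (ha : 0 < a) (hr : r ∈ Ioc 0 1) :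
    HasDerivAt (fun r => logTerm a (r ^ k)) (-k / (r * (1 - (1 - a) * r ^ k))) r := by
  have hrk : r ^ k ∈ Ioc 0 1 := ⟨rpow_pos_of_pos hr.1 k, rpow_le_one hr.1.le hr.2 hk.le⟩
  refine ((hasDerivAt_logTerm_of_mem_Ioc ha hrk).comp r
    (hasDerivAt_rpow_const (Or.inl hr.1.ne'))).congr_deriv ?_
  have := (one_sub_mul_pos ha hrk.1 hrk.2).ne'
  have := hrk.1.ne'
  rw [rpow_sub_one hr.1.ne']
  field_simp

theorem logTerm_deriv_div_eq (hr : r ∈ Ioc 0 1) (hb : 0 < b) :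
    -k / (r * (1 - (1 - a) * r ^ k)) / (-1 / (r * (1 - (1 - b) * r)))
      = k * (1 - (1 - b) * r) / (1 - (1 - a) * r ^ k) := by
  have := (one_sub_mul_pos hb hr.1 hr.2).ne'
  have := hr.1.ne'
  field_simp

theorem strictAntiOn_logTerm_rpow_div (hk : 1 < k) (ha₀ : 0 < a) (ha₁ : a < 1) (hb : 0 < b)
    (hab : k * (1 - a) * b ≤ a * (1 - b)) :
    StrictAntiOn (fun r => logTerm a (r ^ k) / logTerm b r) (Ioo 0 1) := by
  have hk₀ : 0 < k := by linarith
  refine StrictAntiOn.div_of_deriv_div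
    (fun r hr => (hasDerivAt_logTerm_rpow hk₀ ha₀ hr).continuousAt.continuousWithinAt)
    (fun r hr => (hasDerivAt_logTerm_of_mem_Ioc hb hr).continuousAt.continuousWithinAt)
    (fun r hr => hasDerivAt_logTerm_rpow hk₀ ha₀ (Ioo_subset_Ioc_self hr))
    (fun r hr => hasDerivAt_logTerm_of_mem_Ioc hb (Ioo_subset_Ioc_self hr))
    (fun r hr => ?_) (by simp) (logTerm_one b) ?_
  · have := one_sub_mul_pos hb hr.1 hr.2.le
    exact div_neg_of_neg_of_pos neg_one_lt_zero (mul_pos hr.1 this)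
  · exact (strictAntiOn_mul_one_sub_div_one_sub_rpow hk ha₀ ha₁ hb hab).congr fun r hr =>
      (logTerm_deriv_div_eq (Ioo_subset_Ioc_self hr) hb).symm

theorem tendsto_logTerm_rpow_div_nhdsGT_zero (hk : 0 < k) (ha : 0 < a) (hb : 0 < b) :
    Tendsto (fun r => logTerm a (r ^ k) / logTerm b r) (𝓝[>] 0) (𝓝 k) := by
  have hrk : Tendsto (fun r : ℝ => r ^ k) (𝓝[>] 0) (𝓝 0) :=
    ((continuous_rpow_const hk.le).tendsto' 0 0 (zero_rpow hk.ne')).mono_left nhdsWithin_le_nhds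
  have hid : Tendsto (fun r : ℝ => r) (𝓝[>] 0) (𝓝 0) := nhdsWithin_le_nhds
  have hconst : ∀ c : ℝ, 0 < c → ∀ {s : ℝ → ℝ}, Tendsto s (𝓝[>] 0) (𝓝 0) →
      Tendsto (fun r => Real.log (1 - (1 - c) * s r) - Real.log c) (𝓝[>] 0)
        (𝓝 (Real.log (1 - (1 - c) * 0) - Real.log c)) := fun c _ s hs =>
    ((tendsto_const_nhds.sub (tendsto_const_nhds.mul hs)).log (by simp)).sub_const _
  have h := (hconst a ha hrk).add_mul_div_add_mul_of_tendsto_atTop (p := k) (hconst b hb hid)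
    (tendsto_neg_atBot_atTop.comp tendsto_log_nhdsGT_zero) one_ne_zero
  rw [div_one] at h
  refine h.congr' ?_
  filter_upwards [Ioo_mem_nhdsGT zero_lt_one] with r hr
  have hrk' : r ^ k ∈ Ioc 0 1 := ⟨rpow_pos_of_pos hr.1 k, rpow_le_one hr.1.le hr.2.le hk.le⟩
  rw [logTerm_eq ha.ne' hrk'.1.ne' (one_sub_mul_pos ha hrk'.1 hrk'.2).ne',
    logTerm_eq hb.ne' hr.1.ne' (one_sub_mul_pos hb hr.1 hr.2.le).ne', log_rpow hr.1]
  simp only [Function.comp_apply]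
  ring_nf

theorem tendsto_logTerm_rpow_div_nhdsLT_one (hk : 0 < k) (ha : 0 < a) (hb : 0 < b) :
    Tendsto (fun r => logTerm a (r ^ k) / logTerm b r) (𝓝[<] 1) (𝓝 (k * b / a)) := by
  have hone : (1 : ℝ) ∈ Ioc 0 1 := ⟨zero_lt_one, le_rfl⟩
  have hQ : Tendsto (fun r => k * (1 - (1 - b) * r) / (1 - (1 - a) * r ^ k)) (𝓝[<] 1)
      (𝓝 (k * b / a)) := by
    have hcont : ContinuousAt (fun r => k * (1 - (1 - b) * r) / (1 - (1 - a) * r ^ k)) 1 :=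
      (continuousAt_const.mul (continuousAt_const.sub (continuousAt_const.mul continuousAt_id))).div
        (continuousAt_const.sub (continuousAt_const.mul
          (continuousAt_rpow_const 1 k (Or.inl one_ne_zero)))) (by simp [ha.ne'])
    convert hcont.tendsto.mono_left nhdsWithin_le_nhds using 2
    simp
  refine HasDerivAt.lhopital_zero_left_on_Ioo zero_lt_one
    (fun r hr => hasDerivAt_logTerm_rpow hk ha (Ioo_subset_Ioc_self hr))
    (fun r hr => hasDerivAt_logTerm_of_mem_Ioc hb (Ioo_subset_Ioc_self hr))
    (fun r hr => div_ne_zero (by norm_num) (mul_pos hr.1 (one_sub_mul_pos hb hr.1 hr.2.le)).ne')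
    ?_ ?_ (hQ.congr' ?_)
  · simpa using ((hasDerivAt_logTerm_rpow hk ha hone).continuousAt.tendsto).mono_left
      nhdsWithin_le_nhds
  · simpa using ((hasDerivAt_logTerm_of_mem_Ioc hb hone).continuousAt.tendsto).mono_left
      nhdsWithin_le_nhds
  · filter_upwards [Ioo_mem_nhdsLT zero_lt_one] with r hr
    exact (logTerm_deriv_div_eq (Ioo_subset_Ioc_self hr) hb).symm

end LogTermRatio

/-- For `k > 1` and `θ ∈ (0, π/(2k))`, the function
`f₃(r) = log(1 + (1 - r^k)/(r^k sin kθ)) / log(1 + (1 - r)/(r sin θ))` is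
strictly decreasing on `(0,1)`, tends to `k` as `r → 0⁺` and to
`k sin θ / sin kθ` as `r → 1⁻`. -/
theorem f3_strictAnti (k : ℝ) (hk : 1 < k) (θ : ℝ) (hθ : θ ∈ Set.Ioo 0 (π / (2 * k))) :
    StrictAntiOn (fun r : ℝ =>
        Real.log (1 + (1 - r ^ k) / (r ^ k * Real.sin (k * θ))) /
          Real.log (1 + (1 - r) / (r * Real.sin θ)))
      (Set.Ioo (0 : ℝ) 1) ∧
    Tendsto (fun r : ℝ =>
        Real.log (1 + (1 - r ^ k) / (r ^ k * Real.sin (k * θ))) /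
          Real.log (1 + (1 - r) / (r * Real.sin θ)))
      (𝓝[>] 0) (𝓝 k) ∧
    Tendsto (fun r : ℝ =>
        Real.log (1 + (1 - r ^ k) / (r ^ k * Real.sin (k * θ))) /
          Real.log (1 + (1 - r) / (r * Real.sin θ)))
      (𝓝[<] 1) (𝓝 (k * Real.sin θ / Real.sin (k * θ))) := by
  obtain ⟨hθ₀, hθ₁⟩ := hθ
  have hk₀ : 0 < k := by linarith
  have hkθ : k * θ < π / 2 := by
    rw [lt_div_iff₀ (by positivity)] at hθ₁
    linarith
  have ha₀ : 0 < sin (k * θ) := sin_pos_of_pos_of_lt_pi (by positivity) (by linarith [pi_pos])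
  have ha₁ : sin (k * θ) < 1 := by
    simpa using sin_lt_sin_of_lt_of_le_pi_div_two (by nlinarith [pi_pos]) le_rfl hkθ
  have hb : 0 < sin θ := sin_pos_of_pos_of_lt_pi hθ₀ (by nlinarith [pi_pos])
  exact ⟨strictAntiOn_logTerm_rpow_div hk ha₀ ha₁ hb
      (mul_one_sub_sin_mul_sin_le hk.le hθ₀ hkθ.le),
    tendsto_logTerm_rpow_div_nhdsGT_zero hk₀ ha₀ hb,
    tendsto_logTerm_rpow_div_nhdsLT_one hk₀ ha₀ hb⟩
end
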